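/- Let ε ≥ 0 and λ ∈ (0,1]. Then (1 - 1/(e^ε + 1)) / (1 + (1/(e^ε + 1))·((1-λ)/λ)) ≤ e^ε·λ / (1 + λ·e^ε) ≤ e^ε·λ. In particular, if a graph of density λ must attain expected Jaccard similarity at least a constant c > 0 under randomized response with parameter ε (up to vanishing error terms), then e^ε ≥ c/λ, i.e., ε ≥ log(c/λ). -/

import Mathlib

lemma randomizedResponse_ratio_eq {x lam : ℝ} (hx : 0 ≤ x) (hl : 0 < lam) :
    (1 - 1 / (x + 1)) / (1 + 1 / (x + 1) * ((1 - lam) / lam)) = x * lam / (1 + lam * x) := by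
  have hx1 : x + 1 ≠ 0 := by positivity
  have hlx : 1 + lam * x ≠ 0 := by positivity
  have hden : 1 + 1 / (x + 1) * ((1 - lam) / lam) = (1 + lam * x) / ((x + 1) * lam) := by
    field_simp
    ring
  rw [hden]
  field_simp
  ring

lemma div_one_add_mul_le_self {x lam : ℝ} (hx : 0 ≤ x) (hl : 0 ≤ lam) :
    x * lam / (1 + lam * x) ≤ x * lam :=
  div_le_self (by positivity) (le_add_of_nonneg_right (by positivity))

lemma div_le_exp_and_log_div_le {ε lam c : ℝ} (hl : 0 < lam) (hc : 0 < c)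
    (hcle : c ≤ Real.exp ε * lam) : c / lam ≤ Real.exp ε ∧ Real.log (c / lam) ≤ ε := by
  have hdiv : c / lam ≤ Real.exp ε := (div_le_iff₀ hl).mpr hcle
  exact ⟨hdiv, (Real.log_le_iff_le_exp (by positivity)).mpr hdiv⟩

theorem stmt_7_general (ε lam : ℝ) (hl0 : 0 < lam) :
    (1 - 1 / (Real.exp ε + 1)) / (1 + (1 / (Real.exp ε + 1)) * ((1 - lam) / lam))
        ≤ Real.exp ε * lam / (1 + lam * Real.exp ε)
    ∧ Real.exp ε * lam / (1 + lam * Real.exp ε) ≤ Real.exp ε * lam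
    ∧ (∀ c : ℝ, 0 < c → c ≤ Real.exp ε * lam →
        c / lam ≤ Real.exp ε ∧ Real.log (c / lam) ≤ ε) :=
  ⟨(randomizedResponse_ratio_eq (Real.exp_nonneg ε) hl0).le,
    div_one_add_mul_le_self (Real.exp_nonneg ε) hl0.le,
    fun _ hc hcle => div_le_exp_and_log_div_le hl0 hc hcle⟩

theorem stmt_7 (ε lam : ℝ) (hε : 0 ≤ ε) (hl0 : 0 < lam) (hl1 : lam ≤ 1) :
    (1 - 1 / (Real.exp ε + 1)) / (1 + (1 / (Real.exp ε + 1)) * ((1 - lam) / lam))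
        ≤ Real.exp ε * lam / (1 + lam * Real.exp ε)
    ∧ Real.exp ε * lam / (1 + lam * Real.exp ε) ≤ Real.exp ε * lam
    ∧ (∀ c : ℝ, 0 < c → c ≤ Real.exp ε * lam →
        c / lam ≤ Real.exp ε ∧ Real.log (c / lam) ≤ ε) :=
  stmt_7_general ε lam hl0
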